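/- arXiv:1810.07979 — 3 statements merged into one kernel-verified Lean document; each statement's English description precedes it below -/
import Mathlib

section
/- Let X be an ultradiscrete ballean and n ≥ 2 a natural number. Then the n-th power X^n of X is not normal, but the hypersymmetric n-th power [X]^{≤n} of X is normal. -/
universe u v

open Set

/-- A ballean: a set `X` with a family of entourages satisfying the three axioms. -/
structure Ballean (X : Type u) : Type u where
  entourages : Set (Set (X × X))
  diag_mem : ∀ E ∈ entourages, ∀ x : X, (x, x) ∈ E
  comp_inv_sub : ∀ E ∈ entourages, ∀ F ∈ entourages, ∃ D ∈ entourages,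
      {p : X × X | ∃ y : X, (p.1, y) ∈ E ∧ (p.2, y) ∈ F} ⊆ D
  sUnion_eq_univ : ⋃₀ entourages = Set.univ

namespace Ballean

variable {X : Type u}

/-- The ball `E[x]` of radius `E` centered at `x`. -/
def ball (E : Set (X × X)) (x : X) : Set X := {y | (x, y) ∈ E}

/-- The `E`-neighborhood `E[A]` of a set `A`. -/
def img (E : Set (X × X)) (A : Set X) : Set X := {y | ∃ a ∈ A, (a, y) ∈ E}

/-- A subset is bounded if it is contained in some ball. -/
def IsBounded (B : Ballean X) (S : Set X) : Prop :=
  ∃ E ∈ B.entourages, ∃ x : X, S ⊆ ball E x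

def Unbounded (B : Ballean X) : Prop := ¬ B.IsBounded Set.univ

/-- Two sets are asymptotically disjoint if `E[A] ∩ E[C]` is bounded for all entourages. -/
def AsympDisjoint (B : Ballean X) (A C : Set X) : Prop :=
  ∀ E ∈ B.entourages, B.IsBounded (img E A ∩ img E C)

/-- `U` is an asymptotic neighborhood of `A` if `E[A] \ U` is bounded for all entourages. -/
def AsympNbhd (B : Ballean X) (A U : Set X) : Prop :=
  ∀ E ∈ B.entourages, B.IsBounded (img E A \ U)

/-- A ballean is normal if asymptotically disjoint sets have disjoint asymptotic
neighborhoods. -/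
def Normal (B : Ballean X) : Prop :=
  ∀ A C : Set X, B.AsympDisjoint A C →
    ∃ U V : Set X, B.AsympNbhd A U ∧ B.AsympNbhd C V ∧ Disjoint U V

/-- A ballean is ultranormal if it contains no two unbounded asymptotically disjoint sets. -/
def Ultranormal (B : Ballean X) : Prop :=
  ∀ A C : Set X, B.AsympDisjoint A C → B.IsBounded A ∨ B.IsBounded C

/-- A ballean is discrete if it is unbounded and every entourage acts trivially
outside a bounded set. -/
def Discrete (B : Ballean X) : Prop :=
  B.Unbounded ∧ ∀ E ∈ B.entourages, ∃ S : Set X, B.IsBounded S ∧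
    ∀ x ∉ S, ball E x = {x}

/-- A ballean has bounded growth if there is a growth entourage `G`. -/
def BoundedGrowth (B : Ballean X) : Prop :=
  ∃ G : Set (X × X),
    (∀ S : Set X, B.IsBounded S → B.IsBounded (img G S)) ∧
    (∀ E ∈ B.entourages, ∃ S : Set X, B.IsBounded S ∧ ∀ x ∉ S, ball E x ⊆ ball G x)

/-- The bornology of a ballean has a linearly ordered base. -/
def HasLinearBornBase (B : Ballean X) : Prop :=
  ∃ 𝒞 : Set (Set X), (∀ C ∈ 𝒞, B.IsBounded C) ∧
    (∀ C ∈ 𝒞, ∀ D ∈ 𝒞, C ⊆ D ∨ D ⊆ C) ∧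
    ∀ S : Set X, B.IsBounded S → ∃ C ∈ 𝒞, S ⊆ C

/-- The additivity of the bornology: the smallest cardinality of a family of bounded
sets with no bounded upper bound. -/
noncomputable def addBorn (B : Ballean X) : Cardinal.{u} :=
  sInf {c | ∃ 𝒜 : Set (Set X), (∀ A ∈ 𝒜, B.IsBounded A) ∧
    (¬ ∃ D : Set X, B.IsBounded D ∧ ∀ A ∈ 𝒜, A ⊆ D) ∧ c = Cardinal.mk ↥𝒜}

/-- The cofinality of the bornology: the smallest cardinality of a base of the bornology. -/
noncomputable def cofBorn (B : Ballean X) : Cardinal.{u} :=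
  sInf {c | ∃ 𝒞 : Set (Set X), (∀ C ∈ 𝒞, B.IsBounded C) ∧
    (∀ S : Set X, B.IsBounded S → ∃ C ∈ 𝒞, S ⊆ C) ∧ c = Cardinal.mk ↥𝒞}

/-- The cofinality of the family of entourages. -/
noncomputable def cofEnt (B : Ballean X) : Cardinal.{u} :=
  sInf {c | ∃ 𝒞 : Set (Set (X × X)), 𝒞 ⊆ B.entourages ∧
    (∀ E ∈ B.entourages, ∃ C ∈ 𝒞, E ⊆ C) ∧ c = Cardinal.mk ↥𝒞}

/-- A ballean is `cof`-regular if `cof(𝓔) = cof(B_X)`. -/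
def CofRegular (B : Ballean X) : Prop := B.cofEnt = B.cofBorn

end Ballean

/-- The entourages of the product of two balleans. -/
def prodEnt {X Y : Type u} (BX : Ballean X) (BY : Ballean Y) :
    Set (Set ((X × Y) × (X × Y))) :=
  {E | ∃ EX ∈ BX.entourages, ∃ EY ∈ BY.entourages,
    E = {p | (p.1.1, p.2.1) ∈ EX ∧ (p.1.2, p.2.2) ∈ EY}}

/-- The entourages of the box-product of a family of balleans. -/
def boxEnt {I : Type v} {X : I → Type u} (B : ∀ i, Ballean (X i)) :
    Set (Set ((∀ i, X i) × (∀ i, X i))) :=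
  {E | ∃ F : ∀ i, Set (X i × X i), (∀ i, F i ∈ (B i).entourages) ∧
    E = {p | ∀ i, (p.1 i, p.2 i) ∈ F i}}

/-- The entourages of the `n`-th power of a ballean. -/
def powEnt {X : Type u} (B : Ballean X) (n : ℕ) :
    Set (Set ((Fin n → X) × (Fin n → X))) :=
  {E | ∃ F : Fin n → Set (X × X), (∀ i, F i ∈ B.entourages) ∧
    E = {p | ∀ i, (p.1 i, p.2 i) ∈ F i}}

/-- The underlying set of the hypersymmetric `n`-th power: nonempty subsets of `X` of
cardinality at most `n`. -/
def HyperLE (X : Type u) (n : ℕ) : Type u :=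
  {A : Set X // A.Nonempty ∧ Cardinal.mk ↥A ≤ (n : Cardinal.{u})}

/-- The entourages of the hypersymmetric `n`-th power `[X]^{≤n}`. -/
def hyperEnt {X : Type u} (B : Ballean X) (n : ℕ) :
    Set (Set (HyperLE X n × HyperLE X n)) :=
  {Eh | ∃ E ∈ B.entourages,
    Eh = {p | p.1.1 ⊆ Ballean.img E p.2.1 ∧ p.2.1 ⊆ Ballean.img E p.1.1}}

/-!
In an ultradiscrete ballean the bounded sets are the sets outside a nonprincipal ultrafilter `p`,
and every entourage is the identity off a bounded set.

`X^n` is not normal: disjoint asymptotic neighbourhoods `U`, `V` of two coordinate axes through a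
point would give disjoint relations on `X` such that every `p`-small set is `U`-related to
`p`-almost every point from the left and `V`-related to `p`-almost every point from the right.
Choose pairs `(x_β, y_β)` transfinitely, `x_β` `V`-related to all earlier points and `y_β`
`U`-related from all earlier points and from `x_β`, until the chosen points form a `p`-large set.
One of the sets `{x_β}`, `{y_β}` is then small, so some chosen point is `U`-related from all `x_β`
(resp. `V`-related to all `y_β`); being chosen before some stage `γ`, it is also `V`-related from
`x_γ` (resp. `U`-related to `y_γ`).

`[X]^{≤n}` is normal: for asymptotically disjoint `𝒜`, `𝒞` the points lying both in a member of
`𝒜` and in a member of `𝒞` with at least two points each form a bounded set, because a colouring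
argument gives a `p`-large `S` such that for `x ∈ S` these two members meet `S` only in `x`, which
makes them uniformly close. So for one of the families, say `𝒜`, the members with two points lie
in a bounded set. Far away, an `Ê`-neighbour of a singleton is the singleton itself, hence `𝒜` is
an asymptotic neighbourhood of itself, and `𝒜`, `𝒜ᶜ` separate `𝒜` from `𝒞`.
-/

open Function

section Coloring

variable {α : Type u} {m : ℕ}

lemma Finset.exists_mem_card_filter_mem_le [DecidableEq α] (F : α → Finset α)
    (hm : ∀ x, (F x).card ≤ m) {S : Finset α} (hS : S.Nonempty) :
    ∃ v ∈ S, (S.filter fun u => v ∈ F u).card ≤ m := by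
  refine Finset.exists_le_of_sum_le hS ?_
  calc ∑ v ∈ S, (S.filter fun u => v ∈ F u).card
      = ∑ u ∈ S, (S.filter fun v => v ∈ F u).card :=
        (Finset.sum_card_bipartiteAbove_eq_sum_card_bipartiteBelow (fun u v => v ∈ F u)).symm
    _ ≤ ∑ _v ∈ S, m := Finset.sum_le_sum fun u _ =>
        (Finset.card_le_card fun v hv => (Finset.mem_filter.1 hv).2).trans (hm u)

/-- Greedy colouring: a vertex of in-degree at most `m` has at most `2 * m` neighbours. -/
lemma exists_coloring_on (F : α → Finset α) (hF : ∀ x, x ∉ F x) (hm : ∀ x, (F x).card ≤ m)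
    (S : Finset α) :
    ∃ c : α → Fin (2 * m + 1), ∀ x ∈ S, ∀ y ∈ F x, y ∈ S → c y ≠ c x := by
  classical
  induction S using Finset.strongInduction with
  | H S ih =>
  rcases S.eq_empty_or_nonempty with rfl | hS
  · exact ⟨fun _ => 0, by simp⟩
  obtain ⟨v, hv, hdeg⟩ := Finset.exists_mem_card_filter_mem_le F hm hS
  obtain ⟨c, hc⟩ := ih (S.erase v) (Finset.erase_ssubset hv)
  set forbidden := (F v).image c ∪ (S.filter fun u => v ∈ F u).image c
  have hcard : forbidden.card < (Finset.univ : Finset (Fin (2 * m + 1))).card := by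
    calc forbidden.card ≤ m + m :=
          (Finset.card_union_le _ _).trans (add_le_add (Finset.card_image_le.trans (hm v))
            (Finset.card_image_le.trans hdeg))
      _ < _ := by simp; omega
  obtain ⟨k, -, hk⟩ := Finset.exists_mem_notMem_of_card_lt_card hcard
  refine ⟨update c v k, fun x hx y hy hyS => ?_⟩
  by_cases hxv : x = v
  · subst hxv
    have hyx : y ≠ x := fun h => hF x (h ▸ hy)
    rw [update_self, update_of_ne hyx]
    exact fun h => hk (Finset.mem_union_left _ (h ▸ Finset.mem_image_of_mem c hy))
  by_cases hyv : y = v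
  · subst hyv
    rw [update_self, update_of_ne hxv]
    exact fun h => hk (Finset.mem_union_right _
      (h ▸ Finset.mem_image_of_mem c (Finset.mem_filter.2 ⟨hx, hy⟩)))
  rw [update_of_ne hxv, update_of_ne hyv]
  exact hc x (Finset.mem_erase.2 ⟨hxv, hx⟩) y hy (Finset.mem_erase.2 ⟨hyv, hyS⟩)

/-- Compactness: colourings of larger and larger finite sets converge along an ultrafilter. -/
lemma exists_coloring (F : α → Finset α) (hF : ∀ x, x ∉ F x) (hm : ∀ x, (F x).card ≤ m) :
    ∃ c : α → Fin (2 * m + 1), ∀ x, ∀ y ∈ F x, c y ≠ c x := by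
  classical
  choose c hc using exists_coloring_on F hF hm
  let 𝒱 : Ultrafilter (Finset α) := Ultrafilter.of Filter.atTop
  have hlim : ∀ x, ∃ k, {S | c S x = k} ∈ 𝒱 := fun x => by
    obtain ⟨k, hk⟩ := (𝒱.map fun S => c S x).eq_pure_of_finite
    exact ⟨k, show {k} ∈ 𝒱.map fun S => c S x by rw [hk]; rfl⟩
  choose col hcol using hlim
  refine ⟨col, fun x y hy => ?_⟩
  obtain ⟨S, ⟨hSx, hSy⟩, hxyS⟩ := Filter.nonempty_of_mem <|
    Filter.inter_mem (Filter.inter_mem (hcol x) (hcol y))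
      (Ultrafilter.of_le _ (Filter.mem_atTop ({x, y} : Finset α)))
  rw [← hSx, ← hSy]
  exact hc S x (hxyS (by simp)) y hy (hxyS (by simp))

lemma Ultrafilter.exists_mem_forall_notMem (p : Ultrafilter α) (F : α → Finset α)
    (hF : ∀ x, x ∉ F x) (hm : ∀ x, (F x).card ≤ m) :
    ∃ S ∈ p, ∀ x ∈ S, ∀ y ∈ F x, y ∉ S := by
  obtain ⟨c, hc⟩ := exists_coloring F hF hm
  obtain ⟨k, hk⟩ := (p.map c).eq_pure_of_finite
  exact ⟨c ⁻¹' {k}, show {k} ∈ p.map c by rw [hk]; rfl,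
    fun x hx y hy hyk => hc x y hy (hyk.trans hx.symm)⟩

end Coloring

section Transfinite

variable {α : Type u}

noncomputable def transfiniteSeq (step : Set α → α × α) : Ordinal.{u} → α × α :=
  Ordinal.lt_wf.fix fun o seq => step {z | ∃ β, ∃ h : β < o, z = (seq β h).1 ∨ z = (seq β h).2}

def chosenBefore (step : Set α → α × α) (o : Ordinal.{u}) : Set α :=
  {z | ∃ β, ∃ _ : β < o, z = (transfiniteSeq step β).1 ∨ z = (transfiniteSeq step β).2}

variable {step : Set α → α × α}

lemma transfiniteSeq_eq (o : Ordinal.{u}) :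
    transfiniteSeq step o = step (chosenBefore step o) := by
  rw [transfiniteSeq, WellFounded.fix_eq]
  rfl

lemma fst_mem_chosenBefore {β o : Ordinal.{u}} (h : β < o) :
    (transfiniteSeq step β).1 ∈ chosenBefore step o :=
  ⟨β, h, Or.inl rfl⟩

lemma snd_mem_chosenBefore {β o : Ordinal.{u}} (h : β < o) :
    (transfiniteSeq step β).2 ∈ chosenBefore step o :=
  ⟨β, h, Or.inr rfl⟩

lemma chosenBefore_succ_subset (β : Ordinal.{u}) :
    chosenBefore step (Order.succ β) ⊆
      insert (transfiniteSeq step β).1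
        (insert (transfiniteSeq step β).2 (chosenBefore step β)) := by
  rintro z ⟨γ, hγ, hz⟩
  rcases (Order.lt_succ_iff.1 hγ).lt_or_eq with hγβ | rfl
  · exact Or.inr (Or.inr ⟨γ, hγβ, hz⟩)
  · rcases hz with rfl | rfl
    exacts [Or.inl rfl, Or.inr (Or.inl rfl)]

variable {p : Ultrafilter α}

structure IsNextPair (U V : Set (α × α)) (Z : Set α) (q : α × α) : Prop where
  fst_notMem : q.1 ∉ Z
  snd_notMem : q.2 ∉ insert q.1 Z
  fst_rel : ∀ z ∈ Z, (q.1, z) ∈ V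
  rel_snd : ∀ z ∈ insert q.1 Z, (z, q.2) ∈ U

lemma Ultrafilter.insert_notMem (hp : ∀ a, {a} ∉ p) {s : Set α} (hs : s ∉ p) (a : α) :
    insert a s ∉ p := by
  rw [Set.insert_eq, Ultrafilter.union_mem_iff]
  exact not_or.2 ⟨hp a, hs⟩

/-- Such a stage exists since otherwise `step` would inject the ordinals into `α`; the first one
is a limit stage since one step adds only two points. -/
lemma exists_first_large_chosenBefore (hp : ∀ a, {a} ∉ p) (hnew : ∀ Z ∉ p, (step Z).1 ∉ Z) :
    ∃ lam, chosenBefore step lam ∈ p ∧ (∀ β < lam, chosenBefore step β ∉ p) ∧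
      ∀ z ∈ chosenBefore step lam, ∃ γ < lam, z ∈ chosenBefore step γ := by
  have hlarge : {o | chosenBefore step o ∈ p}.Nonempty := by
    by_contra! h
    refine not_injective_of_ordinal (fun o => (transfiniteSeq step o).1)
      (Injective.of_lt_imp_ne fun a b hab heq => ?_)
    have hb := hnew _ (Set.eq_empty_iff_forall_notMem.1 h b)
    rw [← transfiniteSeq_eq (step := step)] at hb
    exact hb (heq ▸ fst_mem_chosenBefore hab)
  obtain ⟨lam, hlam, hmin⟩ := Ordinal.lt_wf.has_min _ hlarge
  have hsmall : ∀ β < lam, chosenBefore step β ∉ p := fun β hβ h => hmin β h hβ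
  refine ⟨lam, hlam, hsmall, ?_⟩
  rintro z ⟨β, hβ, hz⟩
  refine ⟨Order.succ β, (Order.succ_le_of_lt hβ).lt_of_ne fun heq => ?_, β, Order.lt_succ β, hz⟩
  exact Ultrafilter.insert_notMem hp (Ultrafilter.insert_notMem hp (hsmall β hβ) _) _
    (p.mem_of_superset hlam (heq ▸ chosenBefore_succ_subset β))

lemma Ultrafilter.exists_next_pair (hp : ∀ a, {a} ∉ p) {U V : Set (α × α)}
    (hU : ∀ T ∉ p, ∀ᶠ y in p, ∀ x ∈ T, (x, y) ∈ U)
    (hV : ∀ T ∉ p, ∀ᶠ x in p, ∀ y ∈ T, (x, y) ∈ V) {Z : Set α} (hZ : Z ∉ p) :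
    ∃ q, IsNextPair U V Z q := by
  obtain ⟨x, hxV, hxZ⟩ := ((hV Z hZ).and (Ultrafilter.compl_mem_iff_notMem.2 hZ)).exists
  have hxZ' := Ultrafilter.insert_notMem hp hZ x
  obtain ⟨y, hyU, hyZ⟩ := ((hU _ hxZ').and (Ultrafilter.compl_mem_iff_notMem.2 hxZ')).exists
  exact ⟨(x, y), hxZ, hyZ, hxV, hyU⟩

theorem Ultrafilter.not_disjoint_of_forall_eventually (p : Ultrafilter α) (hp : ∀ a, {a} ∉ p)
    {U V : Set (α × α)}
    (hU : ∀ T ∉ p, ∀ᶠ y in p, ∀ x ∈ T, (x, y) ∈ U)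
    (hV : ∀ T ∉ p, ∀ᶠ x in p, ∀ y ∈ T, (x, y) ∈ V) : ¬ Disjoint U V := by
  intro hUV
  obtain ⟨a₀, -⟩ := Filter.nonempty_of_mem (Filter.univ_mem : Set.univ ∈ (p : Filter α))
  have : ∀ Z : Set α, ∃ q, Z ∉ p → IsNextPair U V Z q := fun Z => by
    by_cases hZ : Z ∈ p
    · exact ⟨(a₀, a₀), fun h => (h hZ).elim⟩
    · exact (Ultrafilter.exists_next_pair hp hU hV hZ).imp fun _ h _ => h
  choose step hstep using this
  obtain ⟨lam, hlam, hsmall, hlimit⟩ :=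
    exists_first_large_chosenBefore hp fun Z hZ => (hstep Z hZ).fst_notMem
  have hspec : ∀ γ < lam, IsNextPair U V (chosenBefore step γ) (transfiniteSeq step γ) :=
    fun γ hγ => transfiniteSeq_eq γ ▸ hstep _ (hsmall γ hγ)
  set xs := {x | ∃ β < lam, (transfiniteSeq step β).1 = x}
  set ys := {y | ∃ β < lam, (transfiniteSeq step β).2 = y}
  have hxy : Disjoint xs ys := by
    refine Set.disjoint_left.2 ?_
    rintro _ ⟨β, hβ, rfl⟩ ⟨γ, hγ, heq⟩
    rcases lt_trichotomy β γ with h | rfl | h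
    · exact (hspec γ hγ).snd_notMem (heq ▸ Set.mem_insert_of_mem _ (fst_mem_chosenBefore h))
    · exact (hspec β hβ).snd_notMem (heq ▸ Set.mem_insert _ _)
    · exact (hspec β hβ).fst_notMem (heq ▸ snd_mem_chosenBefore h)
  have hsmall' : xs ∉ p ∨ ys ∉ p := by
    by_contra! h
    exact p.empty_notMem (hxy.inter_eq ▸ Filter.inter_mem h.1 h.2)
  rcases hsmall' with hxs | hys
  · obtain ⟨z, hzU, hz⟩ := ((hU xs hxs).and hlam).exists
    obtain ⟨γ, hγ, hzγ⟩ := hlimit z hz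
    exact Set.disjoint_left.1 hUV (hzU _ ⟨γ, hγ, rfl⟩) ((hspec γ hγ).fst_rel z hzγ)
  · obtain ⟨z, hzV, hz⟩ := ((hV ys hys).and hlam).exists
    obtain ⟨γ, hγ, hzγ⟩ := hlimit z hz
    exact Set.disjoint_left.1 hUV ((hspec γ hγ).rel_snd z (Set.mem_insert_of_mem _ hzγ))
      (hzV _ ⟨γ, hγ, rfl⟩)

end Transfinite

lemma HyperLE.finite {X : Type u} {n : ℕ} (A : HyperLE X n) : A.1.Finite :=
  Cardinal.lt_aleph0_iff_set_finite.1 (A.2.2.trans_lt Cardinal.natCast_lt_aleph0)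

lemma HyperLE.ncard_le {X : Type u} {n : ℕ} (A : HyperLE X n) : A.1.ncard ≤ n := by
  rw [← Nat.card_coe_set_eq]
  exact (Cardinal.toNat_le_toNat A.2.2 Cardinal.natCast_lt_aleph0).trans_eq
    (Cardinal.toNat_natCast n)

lemma HyperLE.exists_finset_sdiff_subset {X : Type u} {n : ℕ} (A C : HyperLE X n) (x : X) :
    ∃ s : Finset X, x ∉ s ∧ s.card ≤ 2 * n ∧ A.1 \ {x} ⊆ s ∧ C.1 \ {x} ⊆ s := by
  have hfin := (A.finite.union C.finite).sdiff (t := {x})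
  refine ⟨hfin.toFinset, by simp, ?_, fun y hy => ?_, fun y hy => ?_⟩
  · rw [← Set.ncard_eq_toFinset_card _ hfin]
    calc _ ≤ (A.1 ∪ C.1).ncard := Set.ncard_le_ncard Set.sdiff_subset (A.finite.union C.finite)
      _ ≤ A.1.ncard + C.1.ncard := Set.ncard_union_le _ _
      _ ≤ 2 * n := by linarith [A.ncard_le, C.ncard_le]
  · simpa using Set.sdiff_subset_sdiff_left Set.subset_union_left hy
  · simpa using Set.sdiff_subset_sdiff_left Set.subset_union_right hy

namespace Ballean

variable {X : Type u} {B : Ballean X} {E F : Set (X × X)} {S T : Set X}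

lemma exists_swap_mem (hF : F ∈ B.entourages) :
    ∃ D ∈ B.entourages, ∀ a b, (a, b) ∈ F → (b, a) ∈ D := by
  obtain ⟨D, hD, hsub⟩ := B.comp_inv_sub F hF F hF
  exact ⟨D, hD, fun a b hab => hsub ⟨b, B.diag_mem F hF b, hab⟩⟩

lemma exists_comp_mem (hE : E ∈ B.entourages) (hF : F ∈ B.entourages) :
    ∃ D ∈ B.entourages, ∀ x y z, (x, y) ∈ E → (y, z) ∈ F → (x, z) ∈ D := by
  obtain ⟨F', hF', hswap⟩ := exists_swap_mem hF
  obtain ⟨D, hD, hsub⟩ := B.comp_inv_sub E hE F' hF'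
  exact ⟨D, hD, fun x y z hxy hyz => hsub ⟨y, hxy, hswap y z hyz⟩⟩

lemma exists_union_subset (hE : E ∈ B.entourages) (hF : F ∈ B.entourages) :
    ∃ D ∈ B.entourages, E ∪ F ⊆ D := by
  obtain ⟨D, hD, hcomp⟩ := exists_comp_mem hE hF
  refine ⟨D, hD, ?_⟩
  rintro ⟨a, b⟩ (h | h)
  · exact hcomp a b b h (B.diag_mem F hF b)
  · exact hcomp a a b (B.diag_mem E hE a) h

lemma IsBounded.subset (hT : B.IsBounded T) (hST : S ⊆ T) : B.IsBounded S := by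
  obtain ⟨E, hE, x, hx⟩ := hT
  exact ⟨E, hE, x, hST.trans hx⟩

lemma IsBounded.img (hS : B.IsBounded S) (hE : E ∈ B.entourages) : B.IsBounded (img E S) := by
  obtain ⟨F, hF, x, hx⟩ := hS
  obtain ⟨D, hD, hcomp⟩ := exists_comp_mem hF hE
  exact ⟨D, hD, x, fun z ⟨a, ha, haz⟩ => hcomp x a z (hx ha) haz⟩

lemma IsBounded.union (hS : B.IsBounded S) (hT : B.IsBounded T) : B.IsBounded (S ∪ T) := by
  obtain ⟨E, hE, x, hx⟩ := hS
  obtain ⟨F, hF, y, hy⟩ := hT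
  obtain ⟨G, hG, hxy⟩ : (x, y) ∈ ⋃₀ B.entourages := B.sUnion_eq_univ ▸ Set.mem_univ _
  obtain ⟨D₁, hD₁, hcomp⟩ := exists_comp_mem hG hF
  obtain ⟨D, hD, hsub⟩ := exists_union_subset hE hD₁
  refine ⟨D, hD, x, ?_⟩
  rintro z (hz | hz)
  · exact hsub (Or.inl (hx hz))
  · exact hsub (Or.inr (hcomp x y z hxy (hy hz)))

lemma IsBounded.insert (hS : B.IsBounded S) (a : X) : B.IsBounded (insert a S) := by
  obtain ⟨E, hE, -⟩ := id hS
  have ha : B.IsBounded {a} := ⟨E, hE, a, Set.singleton_subset_iff.2 (B.diag_mem E hE a)⟩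
  exact ha.union hS

lemma isBounded_of_finite (h : B.IsBounded ∅) (hS : S.Finite) : B.IsBounded S :=
  hS.induction_on (motive := fun S _ => B.IsBounded S) _ h fun _ _ hS => hS.insert _

lemma IsBounded.exists_prod_subset (hT : B.IsBounded T) :
    ∃ D ∈ B.entourages, T ×ˢ T ⊆ D := by
  obtain ⟨F, hF, x, hx⟩ := hT
  obtain ⟨F', hF', hswap⟩ := exists_swap_mem hF
  obtain ⟨D, hD, hsub⟩ := B.comp_inv_sub F' hF' F' hF'
  exact ⟨D, hD, fun q ⟨ha, hb⟩ => hsub ⟨x, hswap x _ (hx ha), hswap x _ (hx hb)⟩⟩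

lemma AsympDisjoint.symm {A C : Set X} (h : B.AsympDisjoint A C) : B.AsympDisjoint C A :=
  fun E hE => Set.inter_comm (img E A) _ ▸ h E hE

lemma AsympDisjoint.asympNbhd_compl {A C : Set X} (h : B.AsympDisjoint A C) :
    B.AsympNbhd C Aᶜ := fun E hE =>
  (h E hE).subset fun x ⟨hxC, hxA⟩ => ⟨⟨x, not_not.1 hxA, B.diag_mem E hE x⟩, hxC⟩

section Ultradiscrete

lemma Discrete.isBounded_or_isBounded_compl (hdis : B.Discrete) (hun : B.Ultranormal)
    (S : Set X) : B.IsBounded S ∨ B.IsBounded Sᶜ := by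
  refine hun S Sᶜ fun E hE => ?_
  obtain ⟨W, hW, htriv⟩ := hdis.2 E hE
  have hfix : ∀ x ∉ W, ∀ z, (x, z) ∈ E → z = x := fun x hx z hz => by
    have : z ∈ ball E x := hz
    rwa [htriv x hx] at this
  refine (hW.img hE).subset ?_
  rintro z ⟨⟨a, ha, haz⟩, ⟨b, hb, hbz⟩⟩
  by_cases haW : a ∈ W
  · exact ⟨a, haW, haz⟩
  by_cases hbW : b ∈ W
  · exact ⟨b, hbW, hbz⟩
  exact (hb ((hfix b hbW z hbz).symm.trans (hfix a haW z haz) ▸ ha)).elim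

lemma Discrete.isBounded_empty (hdis : B.Discrete) (hun : B.Ultranormal) : B.IsBounded ∅ :=
  (hdis.isBounded_or_isBounded_compl hun ∅).resolve_right (Set.compl_empty ▸ hdis.1)

lemma Discrete.isBounded_or_of_isBounded_inter (hdis : B.Discrete) (hun : B.Ultranormal)
    (h : B.IsBounded (S ∩ T)) : B.IsBounded S ∨ B.IsBounded T :=
  (hdis.isBounded_or_isBounded_compl hun S).imp_right fun hS =>
    (h.union hS).subset fun x hx => (em (x ∈ S)).imp (fun h => ⟨h, hx⟩) id

def cobounded (hdis : B.Discrete) (hun : B.Ultranormal) : Ultrafilter X :=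
  Ultrafilter.ofComplNotMemIff
    (Filter.comk B.IsBounded (hdis.isBounded_empty hun) (fun _ ht _ hst => ht.subset hst)
      fun _ hs _ ht => hs.union ht)
    fun S => by
      simp only [Filter.mem_comk, compl_compl]
      refine ⟨(hdis.isBounded_or_isBounded_compl hun S).resolve_left, fun hSc hS => hdis.1 ?_⟩
      simpa using hS.union hSc

variable {hdis : B.Discrete} {hun : B.Ultranormal}

lemma mem_cobounded_iff : S ∈ cobounded hdis hun ↔ B.IsBounded Sᶜ :=
  Iff.rfl

lemma notMem_cobounded_iff : S ∉ cobounded hdis hun ↔ B.IsBounded S := by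
  rw [← Ultrafilter.compl_mem_iff_notMem, mem_cobounded_iff, compl_compl]

lemma singleton_notMem_cobounded (a : X) : {a} ∉ cobounded hdis hun :=
  notMem_cobounded_iff.2 (insert_empty_eq (β := Set X) a ▸ (hdis.isBounded_empty hun).insert a)

end Ultradiscrete

section Power

variable {n : ℕ} {P : Ballean (Fin n → X)}

lemma isBounded_image_eval (hP : P.entourages = powEnt B n) {s : Set (Fin n → X)}
    (hs : P.IsBounded s) (i : Fin n) : B.IsBounded (eval i '' s) := by
  obtain ⟨E, hE, g, hg⟩ := hs
  rw [hP] at hE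
  obtain ⟨F, hF, rfl⟩ := hE
  exact ⟨F i, hF i, g i, by rintro _ ⟨f, hf, rfl⟩; exact hg hf i⟩

lemma asympDisjoint_range_update (hP : P.entourages = powEnt B n) {i j : Fin n} (hij : i ≠ j)
    (c : X) : P.AsympDisjoint (range (update (const _ c) i)) (range (update (const _ c) j)) := by
  intro E hE
  have hE' := hE
  rw [hP] at hE'
  obtain ⟨F, hF, rfl⟩ := hE'
  refine ⟨_, hE, const _ c, ?_⟩
  rintro f ⟨⟨_, ⟨x, rfl⟩, hx⟩, ⟨_, ⟨y, rfl⟩, hy⟩⟩ k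
  by_cases hk : k = i
  · subst hk
    simpa [update_of_ne hij] using hy k
  · simpa [update_of_ne hk] using hx k

lemma isBounded_setOf_update_notMem (hP : P.entourages = powEnt B n) {i j : Fin n} {c : X}
    {U : Set (Fin n → X)} (hU : P.AsympNbhd (range (update (const _ c) j)) U)
    (hT : B.IsBounded T) :
    B.IsBounded {y | ∃ x ∈ T, update (update (const _ c) i x) j y ∉ U} := by
  obtain ⟨D, hD, hTD⟩ := (hT.insert c).exists_prod_subset
  have hE : {q : (Fin n → X) × (Fin n → X) | ∀ k, (q.1 k, q.2 k) ∈ D} ∈ P.entourages :=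
    hP ▸ ⟨fun _ => D, fun _ => hD, rfl⟩
  refine (isBounded_image_eval hP (hU _ hE) j).subset ?_
  rintro y ⟨x, hx, hxy⟩
  refine ⟨_, ⟨⟨update (const _ c) j y, ⟨y, rfl⟩, fun k => ?_⟩, hxy⟩, by simp⟩
  by_cases hkj : k = j
  · subst hkj
    simpa using B.diag_mem D hD y
  by_cases hki : k = i
  · subst hki
    simpa [update_of_ne hkj] using hTD ⟨mem_insert c T, mem_insert_of_mem c hx⟩
  · simpa [update_of_ne hkj, update_of_ne hki] using B.diag_mem D hD c

theorem not_normal_pow (hdis : B.Discrete) (hun : B.Ultranormal) (hn : 2 ≤ n)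
    (hP : P.entourages = powEnt B n) : ¬ P.Normal := by
  intro hN
  obtain ⟨-, -, c, -⟩ := hdis.isBounded_empty hun
  let i : Fin n := ⟨0, by omega⟩
  let j : Fin n := ⟨1, by omega⟩
  have hij : i ≠ j := by simp [i, j, Fin.ext_iff]
  obtain ⟨U, V, hU, hV, hUV⟩ := hN _ _ (asympDisjoint_range_update hP hij.symm c)
  let ι : X × X → (Fin n → X) := fun q => update (update (const _ c) i q.1) j q.2
  refine (cobounded hdis hun).not_disjoint_of_forall_eventually singleton_notMem_cobounded
    (U := ι ⁻¹' U) (V := ι ⁻¹' V) (fun T hT => ?_) (fun T hT => ?_) (hUV.preimage ι)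
  · refine mem_cobounded_iff.2 ((isBounded_setOf_update_notMem hP (i := i) hU
      (notMem_cobounded_iff.1 hT)).subset fun y hy => ?_)
    simpa [ι] using hy
  · refine mem_cobounded_iff.2 ((isBounded_setOf_update_notMem hP (i := j) hV
      (notMem_cobounded_iff.1 hT)).subset fun x hx => ?_)
    simpa [ι, update_comm hij] using hx

end Power

section Hyper

variable {n : ℕ} {H : Ballean (HyperLE X n)}

lemma hat_mem_entourages (hH : H.entourages = hyperEnt B n) (hE : E ∈ B.entourages) :
    {q : HyperLE X n × HyperLE X n | q.1.1 ⊆ img E q.2.1 ∧ q.2.1 ⊆ img E q.1.1} ∈ H.entourages :=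
  hH ▸ ⟨E, hE, rfl⟩

lemma isBounded_hyper_iff (hn : 1 ≤ n) (hH : H.entourages = hyperEnt B n)
    {𝒟 : Set (HyperLE X n)} : H.IsBounded 𝒟 ↔ ∃ T, B.IsBounded T ∧ ∀ A ∈ 𝒟, A.1 ⊆ T := by
  constructor
  · rintro ⟨Eh, hEh, A₀, h𝒟⟩
    rw [hH] at hEh
    obtain ⟨E, hE, rfl⟩ := hEh
    obtain ⟨a, -⟩ := A₀.2.1
    exact ⟨img E A₀.1, (isBounded_of_finite ⟨E, hE, a, Set.empty_subset _⟩ A₀.finite).img hE,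
      fun A hA => (h𝒟 hA).2⟩
  · rintro ⟨T, hT, h𝒟⟩
    obtain ⟨-, -, x₀, -⟩ := id hT
    obtain ⟨D, hD, hTD⟩ := (hT.insert x₀).exists_prod_subset
    refine ⟨_, hat_mem_entourages hH hD, ⟨{x₀}, Set.singleton_nonempty x₀, by simpa using hn⟩,
      fun A hA => ⟨?_, ?_⟩⟩
    · rintro _ rfl
      obtain ⟨a, ha⟩ := A.2.1
      exact ⟨a, ha, hTD ⟨mem_insert_of_mem _ (h𝒟 A hA ha), mem_insert _ _⟩⟩
    · exact fun a ha => ⟨x₀, rfl, hTD ⟨mem_insert _ _, mem_insert_of_mem _ (h𝒟 A hA ha)⟩⟩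

def nontrivialPoints (𝒜 : Set (HyperLE X n)) : Set X :=
  {x | ∃ A ∈ 𝒜, x ∈ A.1 ∧ A.1.Nontrivial}

/-- Off the bounded set where `E` moves points, an `Ê`-neighbour of a singleton is itself. -/
lemma asympNbhd_self (hdis : B.Discrete) (hn : 1 ≤ n) (hH : H.entourages = hyperEnt B n)
    {𝒜 : Set (HyperLE X n)} (hW : B.IsBounded (nontrivialPoints 𝒜)) : H.AsympNbhd 𝒜 𝒜 := by
  intro Eh hEh
  rw [hH] at hEh
  obtain ⟨E, hE, rfl⟩ := hEh
  obtain ⟨S, hS, htriv⟩ := hdis.2 E hE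
  refine (isBounded_hyper_iff hn hH).2 ⟨img E (nontrivialPoints 𝒜 ∪ S), (hW.union hS).img hE, ?_⟩
  rintro Bl ⟨⟨A, hA, -, hBlA⟩, hBl⟩ y hy
  obtain ⟨a, ha, hay⟩ := hBlA hy
  refine ⟨a, ?_, hay⟩
  by_cases hnt : A.1.Nontrivial
  · exact Or.inl ⟨A, hA, ha, hnt⟩
  refine Or.inr (by_contra fun haS => hBl ?_)
  have hA1 : A.1 = {a} := (Set.not_nontrivial_iff.1 hnt).eq_singleton_of_mem ha
  have hBl1 : Bl.1 ⊆ {a} := fun z hz => by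
    obtain ⟨a', ha', ha'z⟩ := hBlA hz
    rw [hA1, Set.mem_singleton_iff] at ha'
    subst ha'
    have : z ∈ ball E a' := ha'z
    rwa [htriv a' haS] at this
  have : Bl = A := Subtype.ext ((Bl.2.1.subset_singleton_iff.1 hBl1).trans hA1.symm)
  exact this ▸ hA

lemma subset_img_of_diff_subset {D : Set (X × X)} (hD : D ∈ B.entourages)
    (hTD : T ×ˢ T ⊆ D) {x : X} {A C : Set X} (hxC : x ∈ C) (hC : C.Nontrivial)
    (hAT : A \ {x} ⊆ T) (hCT : C \ {x} ⊆ T) : A ⊆ img D C := by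
  intro a ha
  by_cases hax : a = x
  · exact ⟨x, hxC, hax ▸ B.diag_mem D hD x⟩
  obtain ⟨c, hc, hcx⟩ := hC.exists_ne x
  exact ⟨c, hc, hTD ⟨hCT ⟨hc, hcx⟩, hAT ⟨ha, hax⟩⟩⟩

lemma AsympDisjoint.isBounded_nontrivialPoints_inter (hdis : B.Discrete) (hun : B.Ultranormal)
    (hn : 1 ≤ n) (hH : H.entourages = hyperEnt B n) {𝒜 𝒞 : Set (HyperLE X n)}
    (h : H.AsympDisjoint 𝒜 𝒞) : B.IsBounded (nontrivialPoints 𝒜 ∩ nontrivialPoints 𝒞) := by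
  classical
  have hwit : ∀ x, ∃ s : Finset X, x ∉ s ∧ s.card ≤ 2 * n ∧
      (x ∈ nontrivialPoints 𝒜 ∩ nontrivialPoints 𝒞 → ∃ A ∈ 𝒜, ∃ C ∈ 𝒞, x ∈ A.1 ∧ x ∈ C.1 ∧
        A.1.Nontrivial ∧ C.1.Nontrivial ∧ A.1 \ {x} ⊆ s ∧ C.1 \ {x} ⊆ s) := fun x => by
    by_cases hx : x ∈ nontrivialPoints 𝒜 ∩ nontrivialPoints 𝒞
    · obtain ⟨⟨A, hA, hxA, hAnt⟩, ⟨C, hC, hxC, hCnt⟩⟩ := hx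
      obtain ⟨s, hxs, hs, hAs, hCs⟩ := HyperLE.exists_finset_sdiff_subset A C x
      exact ⟨s, hxs, hs, fun _ => ⟨A, hA, C, hC, hxA, hxC, hAnt, hCnt, hAs, hCs⟩⟩
    · exact ⟨∅, by simp, by simp, fun h => (hx h).elim⟩
  choose F hFx hFcard hF using hwit
  obtain ⟨S, hSp, hS⟩ := (cobounded hdis hun).exists_mem_forall_notMem F hFx hFcard
  have hT : B.IsBounded Sᶜ := mem_cobounded_iff.1 hSp
  obtain ⟨D, hD, hTD⟩ := hT.exists_prod_subset
  have hDh := hat_mem_entourages hH hD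
  obtain ⟨T', hT', hsub⟩ := (isBounded_hyper_iff hn hH).1 (h _ hDh)
  refine (hT.union hT').subset fun x hx => ?_
  by_cases hxS : x ∈ S
  swap
  · exact Or.inl hxS
  obtain ⟨A, hA, C, hC, hxA, hxC, hAnt, hCnt, hAF, hCF⟩ := hF x hx
  have hAT : A.1 \ {x} ⊆ Sᶜ := fun y hy => hS x hxS y (hAF hy)
  have hCT : C.1 \ {x} ⊆ Sᶜ := fun y hy => hS x hxS y (hCF hy)
  refine Or.inr (hsub C ⟨⟨A, hA, subset_img_of_diff_subset hD hTD hxC hCnt hAT hCT,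
    subset_img_of_diff_subset hD hTD hxA hAnt hCT hAT⟩, C, hC, H.diag_mem _ hDh C⟩ hxC)

theorem normal_hyper (hdis : B.Discrete) (hun : B.Ultranormal) (hn : 1 ≤ n)
    (hH : H.entourages = hyperEnt B n) : H.Normal := by
  intro 𝒜 𝒞 h
  rcases hdis.isBounded_or_of_isBounded_inter hun
    (h.isBounded_nontrivialPoints_inter hdis hun hn hH) with h𝒜 | h𝒞
  · exact ⟨𝒜, 𝒜ᶜ, asympNbhd_self hdis hn hH h𝒜, h.asympNbhd_compl, disjoint_compl_right⟩
  · exact ⟨𝒞ᶜ, 𝒞, h.symm.asympNbhd_compl, asympNbhd_self hdis hn hH h𝒞, disjoint_compl_left⟩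

end Hyper

end Ballean

/-- STATEMENT 5: for an ultradiscrete ballean `X` and `n ≥ 2`, the `n`-th power `X^n`
is not normal, but the hypersymmetric `n`-th power `[X]^{≤n}` is normal. -/
theorem statement5 {X : Type u} (B : Ballean X)
    (hdis : B.Discrete) (hun : B.Ultranormal)
    {n : ℕ} (hn : 2 ≤ n)
    (P : Ballean (Fin n → X)) (hP : P.entourages = powEnt B n)
    (H : Ballean (HyperLE X n)) (hH : H.entourages = hyperEnt B n) :
    ¬ P.Normal ∧ H.Normal :=
  ⟨Ballean.not_normal_pow hdis hun hn hP, Ballean.normal_hyper hdis hun (by omega) hH⟩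
end

section
/- A ballean (X,𝓔) is normal if and only if any two asymptotically disjoint sets A, B ⊆ X have asymptotically disjoint asymptotic neighborhoods O_A and O_B (here O_A and O_B need not be disjoint as sets). -/
universe u v

open Set

namespace Ballean

variable {X : Type u} {B : Ballean X}

lemma isBounded_mono {S T : Set X} (h : S ⊆ T) (hT : B.IsBounded T) : B.IsBounded S := by
  obtain ⟨E, hE, x, hx⟩ := hT
  exact ⟨E, hE, x, h.trans hx⟩

lemma exists_inv {E F : Set (X × X)} (hE : E ∈ B.entourages) (hF : F ∈ B.entourages) :
    ∃ D ∈ B.entourages, E ⊆ D ∧ ∀ a b : X, (a, b) ∈ F → (b, a) ∈ D := by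
  obtain ⟨D, hD, hsub⟩ := B.comp_inv_sub E hE F hF
  refine ⟨D, hD, ?_, ?_⟩
  · rintro ⟨a, b⟩ hab
    exact hsub ⟨b, hab, B.diag_mem F hF b⟩
  · intro a b hab
    exact hsub ⟨b, B.diag_mem E hE b, hab⟩

lemma exists_comp {E F : Set (X × X)} (hE : E ∈ B.entourages) (hF : F ∈ B.entourages) :
    ∃ D ∈ B.entourages, ∀ a b c : X, (a, b) ∈ E → (b, c) ∈ F → (a, c) ∈ D := by
  obtain ⟨F', hF', _, hFinv⟩ := exists_inv hF hF
  obtain ⟨D, hD, hsub⟩ := B.comp_inv_sub E hE F' hF'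
  exact ⟨D, hD, fun a b c hab hbc => hsub ⟨b, hab, hFinv b c hbc⟩⟩

lemma exists_sup {E F : Set (X × X)} (hE : E ∈ B.entourages) (hF : F ∈ B.entourages) :
    ∃ D ∈ B.entourages, E ⊆ D ∧ F ⊆ D := by
  obtain ⟨F', hF', _, hFinv⟩ := exists_inv hF hF
  obtain ⟨D, hD, hED, hDinv⟩ := exists_inv hE hF'
  refine ⟨D, hD, hED, ?_⟩
  rintro ⟨a, b⟩ hab
  exact hDinv b a (hFinv a b hab)

lemma isBounded_img {E : Set (X × X)} (hE : E ∈ B.entourages) {S : Set X}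
    (hS : B.IsBounded S) : B.IsBounded (img E S) := by
  obtain ⟨F, hF, x, hx⟩ := hS
  obtain ⟨D, hD, hcomp⟩ := exists_comp hF hE
  refine ⟨D, hD, x, ?_⟩
  rintro y ⟨a, haS, haE⟩
  exact hcomp x a y (hx haS) haE

lemma isBounded_union {S T : Set X} (hS : B.IsBounded S) (hT : B.IsBounded T) :
    B.IsBounded (S ∪ T) := by
  obtain ⟨E, hE, x, hxS⟩ := hS
  obtain ⟨F, hF, y, hyT⟩ := hT
  have hxy : (x, y) ∈ ⋃₀ B.entourages := by rw [B.sUnion_eq_univ]; trivial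
  obtain ⟨G, hG, hxyG⟩ := hxy
  obtain ⟨D₁, hD₁, hcomp⟩ := exists_comp hG hF
  obtain ⟨D, hD, hED, hD₁D⟩ := exists_sup hE hD₁
  refine ⟨D, hD, x, ?_⟩
  rintro z (hz | hz)
  · exact hED (hxS hz)
  · exact hD₁D (hcomp x y z hxyG (hyT hz))

lemma asympDisjoint_compl {C V : Set X} (hV : B.AsympNbhd C V) :
    B.AsympDisjoint C Vᶜ := by
  intro E hE
  obtain ⟨D, hD, hsub⟩ := B.comp_inv_sub E hE E hE
  apply isBounded_mono ?_ (isBounded_img hE (hV D hD))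
  rintro x ⟨⟨c, hc, hcx⟩, ⟨z, hz, hzx⟩⟩
  exact ⟨z, ⟨⟨c, hc, hsub ⟨x, hcx, hzx⟩⟩, hz⟩, hzx⟩

lemma bounded_img_diff {V₁ V W : Set X} (hW : B.AsympNbhd V₁ᶜ W)
    (hVW : Disjoint V W) {E : Set (X × X)} (hE : E ∈ B.entourages) :
    B.IsBounded (img E V \ V₁) := by
  obtain ⟨E', hE', _, hEinv⟩ := exists_inv hE hE
  apply isBounded_mono ?_ (isBounded_img hE (hW E' hE'))
  rintro x ⟨⟨v, hv, hvx⟩, hx⟩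
  exact ⟨v, ⟨⟨x, hx, hEinv v x hvx⟩, fun hvW => Set.disjoint_left.mp hVW hv hvW⟩, hvx⟩

end Ballean

/-- STATEMENT 14: a ballean is normal if and only if any two asymptotically disjoint sets
have asymptotically disjoint asymptotic neighborhoods. -/
theorem statement14 {X : Type u} (B : Ballean X) :
    B.Normal ↔
      ∀ A C : Set X, B.AsympDisjoint A C →
        ∃ U V : Set X, B.AsympNbhd A U ∧ B.AsympNbhd C V ∧ B.AsympDisjoint U V := by
  constructor
  · intro hN A C hAC
    obtain ⟨U₁, V₁, hU₁, hV₁, hd⟩ := hN A C hAC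
    obtain ⟨U, W₁, hU, hW₁, hUW₁⟩ := hN A U₁ᶜ (Ballean.asympDisjoint_compl hU₁)
    obtain ⟨V, W₂, hV, hW₂, hVW₂⟩ := hN C V₁ᶜ (Ballean.asympDisjoint_compl hV₁)
    refine ⟨U, V, hU, hV, ?_⟩
    intro E hE
    have h1 := Ballean.bounded_img_diff hW₁ hUW₁ hE
    have h2 := Ballean.bounded_img_diff hW₂ hVW₂ hE
    apply Ballean.isBounded_mono ?_ (Ballean.isBounded_union h1 h2)
    rintro x ⟨hxU, hxV⟩
    by_cases hx : x ∈ U₁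
    · exact Or.inr ⟨hxV, fun hxV₁ => Set.disjoint_left.mp hd hx hxV₁⟩
    · exact Or.inl ⟨hxU, hx⟩
  · intro h A C hAC
    obtain ⟨U, V, hU, hV, hUV⟩ := h A C hAC
    refine ⟨U \ V, V \ U, ?_, ?_, disjoint_sdiff_sdiff⟩
    · intro E hE
      apply Ballean.isBounded_mono ?_ (Ballean.isBounded_union (hU E hE) (hUV E hE))
      rintro x ⟨hxA, hx⟩
      by_cases hxU : x ∈ U
      · have hxV : x ∈ V := by
          by_contra hxV
          exact hx ⟨hxU, hxV⟩
        exact Or.inr ⟨⟨x, hxU, B.diag_mem E hE x⟩, ⟨x, hxV, B.diag_mem E hE x⟩⟩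
      · exact Or.inl ⟨hxA, hxU⟩
    · intro E hE
      apply Ballean.isBounded_mono ?_ (Ballean.isBounded_union (hV E hE) (hUV E hE))
      rintro x ⟨hxC, hx⟩
      by_cases hxV : x ∈ V
      · have hxU : x ∈ U := by
          by_contra hxU
          exact hx ⟨hxV, hxU⟩
        exact Or.inr ⟨⟨x, hxU, B.diag_mem E hE x⟩, ⟨x, hxV, B.diag_mem E hE x⟩⟩
      · exact Or.inl ⟨hxC, hxV⟩
end

section
/- If an unbounded ballean (X,𝓔) has bounded growth, then there exists an unbounded subset M ⊆ X such that the subballean on M is discrete, i.e., M is unbounded in X and for every E ∈ 𝓔 there is a bounded set B ⊆ X such that E[x] ∩ M = {x} for all x ∈ M \ B. -/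
universe u v

open Set

section Helpers

variable {X : Type u}

/-- Every entourage has an entourage containing its inverse. -/
lemma my_inv_sub (B : Ballean X) {E : Set (X × X)} (hE : E ∈ B.entourages) :
    ∃ D ∈ B.entourages, ∀ x y : X, (x, y) ∈ E → (y, x) ∈ D := by
  obtain ⟨D, hD, hsub⟩ := B.comp_inv_sub E hE E hE
  exact ⟨D, hD, fun x y hxy => hsub ⟨y, B.diag_mem E hE y, hxy⟩⟩

/-- Any two entourages are contained in a common entourage. -/
lemma my_union_sub (B : Ballean X) {E F : Set (X × X)} (hE : E ∈ B.entourages)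
    (hF : F ∈ B.entourages) : ∃ D ∈ B.entourages, E ⊆ D ∧ F ⊆ D := by
  obtain ⟨F', hF', hF'inv⟩ := my_inv_sub B hF
  obtain ⟨D, hD, hsub⟩ := B.comp_inv_sub E hE F' hF'
  refine ⟨D, hD, ?_, ?_⟩
  · rintro ⟨a, b⟩ hab
    exact hsub ⟨b, hab, B.diag_mem F' hF' b⟩
  · rintro ⟨a, b⟩ hab
    exact hsub ⟨a, B.diag_mem E hE a, hF'inv a b hab⟩

/-- Composition of two entourages is contained in an entourage. -/
lemma my_comp_sub (B : Ballean X) {E F : Set (X × X)} (hE : E ∈ B.entourages)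
    (hF : F ∈ B.entourages) :
    ∃ D ∈ B.entourages, ∀ x y z : X, (x, y) ∈ E → (y, z) ∈ F → (x, z) ∈ D := by
  obtain ⟨F', hF', hF'inv⟩ := my_inv_sub B hF
  obtain ⟨D, hD, hsub⟩ := B.comp_inv_sub E hE F' hF'
  exact ⟨D, hD, fun x y z hxy hyz => hsub ⟨y, hxy, hF'inv y z hyz⟩⟩

/-- The image of a bounded set under an entourage is bounded. -/
lemma my_img_bounded (B : Ballean X) {E : Set (X × X)} (hE : E ∈ B.entourages)
    {S : Set X} (hS : B.IsBounded S) : B.IsBounded (Ballean.img E S) := by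
  obtain ⟨F, hF, z, hz⟩ := hS
  obtain ⟨D, hD, hsub⟩ := my_comp_sub B hF hE
  refine ⟨D, hD, z, ?_⟩
  rintro y ⟨s, hsS, hsy⟩
  exact hsub z s y (hz hsS) hsy

/-- Union of two bounded sets is bounded. -/
lemma my_union_bounded (B : Ballean X) {S T : Set X} (hS : B.IsBounded S)
    (hT : B.IsBounded T) : B.IsBounded (S ∪ T) := by
  obtain ⟨E, hE, x, hx⟩ := hS
  obtain ⟨F, hF, z, hz⟩ := hT
  have hxz : (x, z) ∈ ⋃₀ B.entourages := by
    rw [B.sUnion_eq_univ]; trivial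
  obtain ⟨C, hC, hxzC⟩ := hxz
  obtain ⟨D, hD, hcomp⟩ := my_comp_sub B hC hF
  obtain ⟨D', hD', hED', hDD'⟩ := my_union_sub B hE hD
  refine ⟨D', hD', x, ?_⟩
  rintro y (hy | hy)
  · exact hED' (hx hy)
  · exact hDD' (hcomp x z y hxzC (hz hy))

end Helpers

/-- STATEMENT 17: if an unbounded ballean has bounded growth, then it contains an
unbounded subset `M` whose subballean is discrete: for every entourage `E` there is a
bounded set `S` such that `E[x] ∩ M = {x}` for all `x ∈ M \ S`. -/
theorem statement17 {X : Type u} (B : Ballean X)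
    (hub : B.Unbounded) (hbg : B.BoundedGrowth) :
    ∃ M : Set X, ¬ B.IsBounded M ∧
      ∀ E ∈ B.entourages, ∃ S : Set X, B.IsBounded S ∧
        ∀ x ∈ M \ S, Ballean.ball E x ∩ M = {x} := by

  obtain ⟨G, hGa, hGb⟩ := hbg
  -- the family of G-separated sets
  set P : Set (Set X) := {A | ∀ x ∈ A, ∀ y ∈ A, x ≠ y → (x, y) ∉ G ∨ (y, x) ∉ G} with hP
  obtain ⟨M, hM⟩ : ∃ M, Maximal (· ∈ P) M := by
    apply zorn_subset
    intro c hcP hchain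
    refine ⟨⋃₀ c, ?_, fun s hs => subset_sUnion_of_mem hs⟩
    rintro x ⟨A, hA, hxA⟩ y ⟨A', hA', hyA'⟩ hxy
    rcases hchain.total hA hA' with h | h
    · exact hcP hA' x (h hxA) y hyA' hxy
    · exact hcP hA x hxA y (h hyA') hxy
  have hMP : M ∈ P := hM.1
  refine ⟨M, ?_, ?_⟩
  · -- M is unbounded
    intro hMb
    have hGM : B.IsBounded (Ballean.img G M) := hGa M hMb
    have hU : B.IsBounded (M ∪ Ballean.img G M) := my_union_bounded B hMb hGM
    obtain ⟨E, hE, w, hw⟩ := hU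
    have hz : ∃ z : X, z ∉ Ballean.ball E w := by
      by_contra h
      push_neg at h
      exact hub ⟨E, hE, w, fun y _ => h y⟩
    obtain ⟨z, hz⟩ := hz
    have hzU : z ∉ M ∪ Ballean.img G M := fun h => hz (hw h)
    have hzM : z ∉ M := fun h => hzU (Or.inl h)
    have hins : insert z M ∈ P := by
      rintro x hx y hy hxy
      rcases hx with rfl | hxM
      · rcases hy with rfl | hyM
        · exact absurd rfl hxy
        · right; intro hyx
          exact hzU (Or.inr ⟨y, hyM, hyx⟩)
      · rcases hy with rfl | hyM
        · left; intro hxy'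
          exact hzU (Or.inr ⟨x, hxM, hxy'⟩)
        · exact hMP x hxM y hyM hxy
    have := hM.2 hins (subset_insert z M)
    exact hzM (this (mem_insert z M))
  · -- discreteness
    intro E hE
    obtain ⟨D₁, hD₁, hD₁inv⟩ := my_inv_sub B hE
    obtain ⟨D, hD, hED, hD₁D⟩ := my_union_sub B hE hD₁
    obtain ⟨S₀, hS₀, hS₀ball⟩ := hGb D hD
    refine ⟨S₀ ∪ Ballean.img D S₀, my_union_bounded B hS₀ (my_img_bounded B hD hS₀), ?_⟩
    rintro x ⟨hxM, hxS⟩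
    apply Subset.antisymm
    · rintro y ⟨hyE, hyM⟩
      by_contra hne
      have hne' : y ≠ x := fun h => hne (h ▸ rfl)
      have hxS₀ : x ∉ S₀ := fun h => hxS (Or.inl h)
      have hxyG : (x, y) ∈ G := hS₀ball x hxS₀ (hED hyE)
      have hyxG : (y, x) ∉ G := by
        rcases hMP x hxM y hyM hne'.symm with h | h
        · exact absurd hxyG h
        · exact h
      have hyS₀ : y ∈ S₀ := by
        by_contra hyS₀
        exact hyxG (hS₀ball y hyS₀ (hD₁D (hD₁inv x y hyE)))
      exact hxS (Or.inr ⟨y, hyS₀, hD₁D (hD₁inv x y hyE)⟩)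
    · rintro y rfl
      exact ⟨B.diag_mem E hE y, hxM⟩
end
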